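/- arXiv:1109.4073 — 2 statements merged into one kernel-verified Lean document; each statement's English description precedes it below -/
import Mathlib

section
/- Let B = 𝒰_m ⊕ ⋯ ⊕ 𝒰_m (n copies of the UHF algebra of type m^∞), and let β : B → B be given by β(x₁,…,x_n) = (P₁ ⊗ x₂, P₂ ⊗ x₃, …, P_n ⊗ x₁) where each P_i ∈ M_m is a rank-one projection. Then the induced map β* on K₀(B) ≅ ℤ[1/m]^n is given by β*(x₁,…,x_n) = (x₂/m, …, x_n/m, x₁/m), and the cokernel of 1 − β* on ℤ[1/m]^n is isomorphic to ℤ/(m^n − 1)ℤ, while 1 − β* is injective. -/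
/-!
Since `m • T` is the cyclic shift, a fixed point of `T` satisfies `x (i + n) = mⁿ • x i`, so
`(mⁿ - 1) • x = 0` and `x = 0` in the domain `ℤ[1/m]`.

For the cokernel, `(1 - T) (eᵢ₊₁ (m a)) = eᵢ₊₁ (m a) - eᵢ a`. Moving along the cycle this way
turns every vector, modulo the image of `1 - T`, into an integer multiple of `e₀ 1`, and going once
around gives `(mⁿ - 1) • e₀ 1 ≡ 0`. Modulo `mⁿ - 1` the integer `m` is invertible with inverse
`v = mⁿ⁻¹`, and the functional `x ↦ ∑ᵢ vⁱ xᵢ` with values in `ℤ/(mⁿ - 1)` is `T`-invariant and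
sends `e₀ 1` to `1`; it therefore identifies the cokernel with `ℤ/(mⁿ - 1)`.
-/

open Submodule LinearMap Fin.NatCast

theorem pow_val_add_one_of_pow_eq_one {M : Type*} [Monoid M] {n : ℕ} [NeZero n] {v : M}
    (hv : v ^ n = 1) (i : Fin n) : v ^ (i + 1 : Fin n).val = v ^ i.val * v := by
  rw [Fin.val_add, ← pow_eq_pow_mod _ hv, pow_add, Fin.val_one', ← pow_eq_pow_mod _ hv, pow_one]

theorem natCast_pow_eq_one_zmod {m : ℕ} (hm : m ≠ 0) (n : ℕ) :
    (m : ZMod (m ^ n - 1)) ^ n = 1 := by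
  have h : ((m ^ n - 1 : ℕ) : ZMod (m ^ n - 1)) = 0 := ZMod.natCast_self _
  rw [Nat.cast_sub (Nat.one_le_pow _ _ (Nat.pos_of_ne_zero hm)), sub_eq_zero] at h
  exact_mod_cast h

section CyclicShift

variable {R : Type*} [CommRing R] {m n : ℕ} [NeZero n] {T : (Fin n → R) →ₗ[ℤ] (Fin n → R)}

theorem apply_add_natCast_of_map_eq_self (hT : ∀ x i, (m : R) * T x i = x (i + 1))
    {x : Fin n → R} (hx : T x = x) (k : ℕ) (i : Fin n) : x (i + (k : Fin n)) = m ^ k * x i := by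
  induction k with
  | zero => simp
  | succ k ih => rw [Nat.cast_succ, ← add_assoc, ← hT x, hx, ih, pow_succ', mul_assoc]

theorem injective_id_sub [IsDomain R] (hT : ∀ x i, (m : R) * T x i = x (i + 1))
    (hm : (m : R) ^ n ≠ 1) :
    Function.Injective ⇑(LinearMap.id - T : (Fin n → R) →ₗ[ℤ] Fin n → R) := by
  rw [injective_iff_map_eq_zero]
  intro x hx
  have hfix : T x = x := (sub_eq_zero.mp hx).symm
  funext i
  have h : ((m : R) ^ n - 1) * x i = 0 := by
    rw [sub_mul, one_mul, ← apply_add_natCast_of_map_eq_self hT hfix, Fin.natCast_self, add_zero,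
      sub_self]
  exact (mul_eq_zero.mp h).resolve_left (sub_ne_zero.mpr hm)

theorem map_single_add_one_natCast_mul (hT : ∀ x i, (m : R) * T x i = x (i + 1))
    (hm : IsUnit (m : R)) (i : Fin n) (a : R) :
    T (Pi.single (i + 1) (m * a)) = Pi.single i a := by
  funext j
  refine hm.mul_left_cancel ?_
  rw [hT]
  simp [Pi.single_apply, mul_ite]

theorem mkQ_single_add_natCast (hT : ∀ x i, (m : R) * T x i = x (i + 1))
    (hm : IsUnit (m : R)) (i : Fin n) (a : R) (k : ℕ) :
    (range (LinearMap.id - T)).mkQ (Pi.single (i + (k : Fin n)) (m ^ k * a)) =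
      (range (LinearMap.id - T)).mkQ (Pi.single i a) := by
  induction k generalizing i with
  | zero => simp
  | succ k ih =>
    have hstep : (range (LinearMap.id - T)).mkQ (Pi.single (i + k + 1) (m * (m ^ k * a))) =
        (range (LinearMap.id - T)).mkQ (Pi.single (i + k) (m ^ k * a)) := by
      refine (Submodule.Quotient.eq _).mpr ⟨Pi.single (i + k + 1) (m * (m ^ k * a)), ?_⟩
      rw [LinearMap.sub_apply, id_apply, map_single_add_one_natCast_mul hT hm]
    rw [Nat.cast_succ, ← add_assoc, pow_succ', mul_assoc, hstep, ih]

theorem pow_card_sub_one_zsmul_mkQ_single (hT : ∀ x i, (m : R) * T x i = x (i + 1))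
    (hm : IsUnit (m : R)) (i : Fin n) (a : R) :
    ((m : ℤ) ^ n - 1) • (range (LinearMap.id - T)).mkQ (Pi.single i a) = 0 := by
  have h := mkQ_single_add_natCast hT hm i a n
  rw [Fin.natCast_self, add_zero] at h
  rw [sub_smul, one_smul, ← map_zsmul, ← Pi.single_smul, zsmul_eq_mul, Int.cast_pow,
    Int.cast_natCast, h, sub_self]

theorem exists_mkQ_eq_zsmul_mkQ_single_zero (hT : ∀ x i, (m : R) * T x i = x (i + 1))
    (hm : IsUnit (m : R)) (hR : ∀ a : R, ∃ (k : ℕ) (b : ℤ), (m : R) ^ k * a = b)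
    (x : Fin n → R) :
    ∃ c : ℤ, (range (LinearMap.id - T)).mkQ x =
      c • (range (LinearMap.id - T)).mkQ (Pi.single 0 1) := by
  induction x using Pi.single_induction with
  | zero => exact ⟨0, by simp⟩
  | add x y hx hy =>
    obtain ⟨c, hc⟩ := hx
    obtain ⟨d, hd⟩ := hy
    exact ⟨c + d, by rw [map_add, hc, hd, add_zsmul]⟩
  | single i a =>
    obtain ⟨k, b, hb⟩ := hR a
    set j := i + (k : Fin n)
    have hj : j + ((-j).val : Fin n) = 0 := by simp
    refine ⟨m ^ (-j).val * b, ?_⟩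
    rw [← mkQ_single_add_natCast hT hm i a k, hb, ← mkQ_single_add_natCast hT hm j _ (-j).val, hj,
      ← map_zsmul, ← Pi.single_smul, zsmul_one]
    push_cast
    rfl

end CyclicShift

section CyclicWeightedSum

variable {R A : Type*} [CommRing R] [CommRing A] {n : ℕ}

def cyclicWeightedSum (π : R →+* A) (v : A) : (Fin n → R) →ₗ[ℤ] A where
  toFun x := ∑ i, v ^ i.val * π (x i)
  map_add' x y := by simp only [Pi.add_apply, map_add, mul_add, Finset.sum_add_distrib]
  map_smul' k x := by
    simp only [Pi.smul_apply, map_zsmul, mul_smul_comm, Finset.smul_sum, RingHom.id_apply]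

theorem cyclicWeightedSum_single (π : R →+* A) (v : A) (i : Fin n) (a : R) :
    cyclicWeightedSum π v (Pi.single i a) = v ^ i.val * π a := by
  simp [cyclicWeightedSum, Pi.single_apply, apply_ite π, mul_ite]

theorem cyclicWeightedSum_surjective [NeZero n] (π : R →+* A) (v : A)
    (h : Function.Surjective (Int.cast : ℤ → A)) :
    Function.Surjective (cyclicWeightedSum π v : (Fin n → R) → A) := by
  intro a
  obtain ⟨k, rfl⟩ := h a
  exact ⟨Pi.single 0 k, by
    rw [cyclicWeightedSum_single, map_intCast, Fin.val_zero, pow_zero, one_mul]⟩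

variable [NeZero n] {m : ℕ} {T : (Fin n → R) →ₗ[ℤ] (Fin n → R)}

theorem cyclicWeightedSum_map (hT : ∀ x i, (m : R) * T x i = x (i + 1)) {π : R →+* A} {v : A}
    (hv : v ^ n = 1) (hvm : v * m = 1) (x : Fin n → R) :
    cyclicWeightedSum π v (T x) = cyclicWeightedSum π v x := by
  have hTx : ∀ i, v ^ i.val * π (T x i) = v ^ (i + 1 : Fin n).val * π (x (i + 1)) := by
    intro i
    rw [pow_val_add_one_of_pow_eq_one hv, ← hT x, map_mul, map_natCast, mul_assoc, ← mul_assoc v,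
      hvm, one_mul]
  simp only [cyclicWeightedSum, LinearMap.coe_mk, AddHom.coe_mk, hTx]
  exact Fintype.sum_equiv (Equiv.addRight 1) _ _ fun i => rfl

theorem range_id_sub_eq_ker_cyclicWeightedSum (hT : ∀ x i, (m : R) * T x i = x (i + 1))
    (hm : IsUnit (m : R)) (hR : ∀ a : R, ∃ (k : ℕ) (b : ℤ), (m : R) ^ k * a = b) (hm₀ : m ≠ 0)
    (π : R →+* ZMod (m ^ n - 1)) :
    range (LinearMap.id - T) = ker (cyclicWeightedSum π ((m : ZMod (m ^ n - 1)) ^ (n - 1))) := by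
  set v := (m : ZMod (m ^ n - 1)) ^ (n - 1)
  have hmn := natCast_pow_eq_one_zmod hm₀ n
  have hvm : v * m = 1 := by rw [← pow_succ, Nat.sub_add_cancel NeZero.one_le, hmn]
  have hv : v ^ n = 1 := by rw [← pow_mul, mul_comm, pow_mul, hmn, one_pow]
  have hle : range (LinearMap.id - T) ≤ ker (cyclicWeightedSum π v) := by
    rintro _ ⟨x, rfl⟩
    rw [mem_ker, LinearMap.sub_apply, map_sub, id_apply, cyclicWeightedSum_map hT hv hvm, sub_self]
  refine le_antisymm hle fun x hx => ?_
  obtain ⟨c, hc⟩ := exists_mkQ_eq_zsmul_mkQ_single_zero hT hm hR x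
  have hc_zero : (c : ZMod (m ^ n - 1)) = 0 := by
    rw [← map_zsmul, mkQ_apply, mkQ_apply, Submodule.Quotient.eq] at hc
    have := hle hc
    rwa [mem_ker, map_sub, hx, zero_sub, neg_eq_zero, map_zsmul, cyclicWeightedSum_single,
      map_one, Fin.val_zero, pow_zero, one_mul, zsmul_one] at this
  obtain ⟨k, rfl⟩ := (ZMod.intCast_zmod_eq_zero_iff_dvd c _).mp hc_zero
  rw [← Submodule.Quotient.mk_eq_zero, ← mkQ_apply, hc, mul_comm, mul_zsmul,
    Nat.cast_sub (Nat.one_le_pow _ _ (Nat.pos_of_ne_zero hm₀)), Nat.cast_pow, Nat.cast_one,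
    pow_card_sub_one_zsmul_mkQ_single hT hm, smul_zero]

end CyclicWeightedSum

section Away

variable {m : ℕ}

noncomputable def awayToZModPowSubOne (hm : m ≠ 0) (n : ℕ) [NeZero n] :
    Localization.Away (m : ℤ) →+* ZMod (m ^ n - 1) :=
  IsLocalization.Away.lift (m : ℤ) (g := Int.castRingHom _) <| by
    simpa using IsUnit.of_pow_eq_one (natCast_pow_eq_one_zmod hm n) (NeZero.ne n)

theorem isUnit_natCast_away : IsUnit (m : Localization.Away (m : ℤ)) := by
  simpa using IsLocalization.Away.algebraMap_isUnit (S := Localization.Away (m : ℤ)) (m : ℤ)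

theorem exists_pow_mul_eq_intCast_away (a : Localization.Away (m : ℤ)) :
    ∃ (k : ℕ) (b : ℤ), (m : Localization.Away (m : ℤ)) ^ k * a = b := by
  obtain ⟨k, b, h⟩ := IsLocalization.Away.surj (m : ℤ) a
  exact ⟨k, b, by simpa [mul_comm] using h⟩

theorem isDomain_away (hm : m ≠ 0) : IsDomain (Localization.Away (m : ℤ)) :=
  IsLocalization.isDomain_localization <| powers_le_nonZeroDivisors_of_noZeroDivisors <| by
    exact_mod_cast hm

theorem natCast_pow_ne_one_away {n : ℕ} (hm : 1 < m) (hn : n ≠ 0) :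
    (m : Localization.Away (m : ℤ)) ^ n ≠ 1 := by
  have hinj := IsLocalization.injective (Localization.Away (m : ℤ))
    (powers_le_nonZeroDivisors_of_noZeroDivisors (by omega : (m : ℤ) ≠ 0))
  intro h
  have : ((m ^ n : ℕ) : ℤ) = 1 := hinj (by simpa using h)
  exact (Nat.one_lt_pow hn hm).ne' (by exact_mod_cast this)

end Away

/-- Let `R = ℤ[1/m]` and let `T : Rⁿ → Rⁿ` be the ℤ-linear map with
`T(x₁,…,xₙ) = (x₂/m, …, xₙ/m, x₁/m)` (characterized by `m · (T x) i = x (i+1)` cyclically).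
Then `1 - T` is injective and its cokernel is isomorphic to `ℤ/(mⁿ - 1)ℤ`. -/
theorem shift_div_m_coker (m n : ℕ) (hm : 1 < m) [NeZero n]
    (T : (Fin n → Localization.Away (m : ℤ)) →ₗ[ℤ] (Fin n → Localization.Away (m : ℤ)))
    (hT : ∀ (x : Fin n → Localization.Away (m : ℤ)) (i : Fin n),
      (m : Localization.Away (m : ℤ)) * T x i = x (i + 1)) :
    Function.Injective ⇑((LinearMap.id :
        (Fin n → Localization.Away (m : ℤ)) →ₗ[ℤ] (Fin n → Localization.Away (m : ℤ))) - T) ∧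
      Nonempty (((Fin n → Localization.Away (m : ℤ)) ⧸
          LinearMap.range ((LinearMap.id :
            (Fin n → Localization.Away (m : ℤ)) →ₗ[ℤ]
              (Fin n → Localization.Away (m : ℤ))) - T)) ≃+ ZMod (m ^ n - 1)) := by
  have hm₀ : m ≠ 0 := by omega
  have := isDomain_away hm₀
  refine ⟨injective_id_sub hT (natCast_pow_ne_one_away hm (NeZero.ne n)), ⟨?_⟩⟩
  let φ := cyclicWeightedSum (n := n) (awayToZModPowSubOne hm₀ n)
    ((m : ZMod (m ^ n - 1)) ^ (n - 1))
  have hrange : range (LinearMap.id - T) = ker φ :=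
    range_id_sub_eq_ker_cyclicWeightedSum hT isUnit_natCast_away exists_pow_mul_eq_intCast_away
      hm₀ _
  have hφ : Function.Surjective φ := cyclicWeightedSum_surjective _ _ ZMod.intCast_surjective
  exact ((quotEquivOfEq _ _ hrange).trans (φ.quotKerEquivOfSurjective hφ)).toAddEquiv
end

section
/- Let A be a unital C*-algebra with the Riesz decomposition property for Murray–von Neumann equivalence classes of projections, and let q, p' be projections in A with p' ≲ 1. If p' ≾ q ⊕ (1 − q) in the sense that p' ∼ a ⊕ b with a ≲ q and b ≲ 1 − q, then there is a partial isometry v ∈ A with v*v ≤ p' and vv* ≤ 1 − q such that p' lies in the closed two-sided ideal generated by q + vv*. -/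
variable {A : Type*} [CStarAlgebra A] [PartialOrder A] [StarOrderedRing A]

/-- `p` is a projection. -/
def IsProjection (p : A) : Prop := IsSelfAdjoint p ∧ IsIdempotentElem p

/-- Murray–von Neumann subequivalence of projections: `p ≲ q`. -/
def MvNLE (p q : A) : Prop := ∃ v : A, star v * v = p ∧ v * star v ≤ q

/-- The closed linear span of a set. -/
noncomputable def clspan (s : Set A) : Set A := closure (Submodule.span ℂ s : Set A)

/-! Write `p' = w*w` with `ww* = a + b`, and let `u`, `v` be partial isometries with `u*u = a`,
`uu* ≤ q`, `v*v = b`, `vv* ≤ 1 - q`.  The witness is `vw`: since `v` annihilates `a`,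
`(vw)(vw)* = vv*`, and `(vw)*(vw) = w*bw ≤ w*(a + b)w = p'`.  The projection `c = q + vv*`
dominates both `uu*` and `vv*`, so `a = u*cu` and `b = v*cv`, whence
`p' = (uw)* c (uw) + (vw)* c (vw)`. -/

section CStarRing

variable {B : Type*} [NonUnitalNormedRing B] [StarRing B] [CStarRing B]

lemma mul_star_mul_self_of_isIdempotentElem {u : B} (hu : IsIdempotentElem (star u * u)) :
    u * (star u * u) = u := by
  rw [← sub_eq_zero, ← CStarRing.star_mul_self_eq_zero_iff]
  have hstar : star (star u * u) = star u * u := (IsSelfAdjoint.star_mul_self u).star_eq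
  calc star (u * (star u * u) - u) * (u * (star u * u) - u)
      = (star u * u) * (star u * u) * (star u * u) - (star u * u) * (star u * u)
          - (star u * u) * (star u * u) + star u * u := by
        simp only [star_sub, star_mul, hstar]
        noncomm_ring
    _ = 0 := by rw [hu.eq, hu.eq]; abel

end CStarRing

section NonUnitalCStarAlgebra

variable {B : Type*} [NonUnitalCStarAlgebra B]

lemma isStarProjection_mul_star_self_of_isIdempotentElem {u : B}
    (hu : IsIdempotentElem (star u * u)) : IsStarProjection (u * star u) :=
  ⟨isIdempotentElem_star_mul_self_iff_isIdempotentElem_self_mul_star.mp hu,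
    .mul_star_self u⟩

variable [PartialOrder B] [StarOrderedRing B]

lemma star_left_conjugate_eq_star_mul_self_of_mul_star_le {u f : B}
    (hu : IsIdempotentElem (star u * u)) (hf : IsStarProjection f) (h : u * star u ≤ f) :
    star u * f * u = star u * u := by
  have hfu : f * (u * star u) = u * star u :=
    (hf.mul_right_and_mul_left_of_nonneg_of_le (mul_star_self_nonneg u) h).2
  calc star u * f * u = star u * f * (u * (star u * u)) := by
        rw [mul_star_mul_self_of_isIdempotentElem hu]
    _ = star u * (f * (u * star u)) * u := by noncomm_ring
    _ = star u * u * (star u * u) := by rw [hfu]; noncomm_ring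
    _ = star u * u := hu.eq

end NonUnitalCStarAlgebra

section CStarAlgebra

variable {B : Type*} [CStarAlgebra B]

lemma IsProjection.isStarProjection {p : B} (hp : IsProjection p) : IsStarProjection p :=
  ⟨hp.2, hp.1⟩

lemma IsStarProjection.mul_eq_zero_of_le_one_sub [PartialOrder B] [StarOrderedRing B] {q x : B}
    (hq : IsStarProjection q) (hx : 0 ≤ x) (h : x ≤ 1 - q) : q * x = 0 := by
  have := (hq.one_sub.mul_right_and_mul_left_of_nonneg_of_le hx h).2
  rwa [sub_mul, one_mul, sub_eq_self] at this

end CStarAlgebra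

theorem riesz_step_full_projection_general
    (q p' : A) (hq : IsProjection q) (hp' : IsProjection p')
    (hdec : ∃ a b : A, IsProjection a ∧ IsProjection b ∧ a * b = 0 ∧
      (∃ w : A, star w * w = p' ∧ w * star w = a + b) ∧ MvNLE a q ∧ MvNLE b (1 - q)) :
    ∃ v : A, star v * v ≤ p' ∧ v * star v ≤ 1 - q ∧
      p' ∈ clspan {z : A | ∃ x y : A, z = x * (q + v * star v) * y} := by
  obtain ⟨-, -, ha, hb, hab, ⟨w, rfl, hw⟩, ⟨u, rfl, hu⟩, ⟨v, rfl, hv⟩⟩ := hdec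
  have hq := hq.isStarProjection
  have hqv : q * (v * star v) = 0 := hq.mul_eq_zero_of_le_one_sub (mul_star_self_nonneg v) hv
  have hc : IsStarProjection (q + v * star v) :=
    hq.add (isStarProjection_mul_star_self_of_isIdempotentElem hb.2) hqv
  have hp'_eq : star w * w = star w * (star u * u + star v * v) * w := by
    rw [← hw, ← hp'.2.eq]; noncomm_ring
  have hvu : v * (star u * u) = 0 := by
    have hba : star v * v * (star u * u) = 0 := by simpa [mul_assoc] using congr(star $hab)
    rw [← mul_star_mul_self_of_isIdempotentElem hb.2, mul_assoc, hba, mul_zero]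
  have hvw : v * w * star (v * w) = v * star v := by
    calc v * w * star (v * w) = v * (w * star w) * star v := by rw [star_mul]; noncomm_ring
      _ = v * star v := by
        rw [hw, mul_add, hvu, zero_add, mul_star_mul_self_of_isIdempotentElem hb.2]
  refine ⟨v * w, ?_, hvw ▸ hv, ?_⟩
  · calc star (v * w) * (v * w) = star w * (star v * v) * w := by rw [star_mul]; noncomm_ring
      _ ≤ star w * (star u * u + star v * v) * w :=
        star_left_conjugate_le_conjugate (le_add_of_nonneg_left (star_mul_self_nonneg u)) w
      _ = star w * w := hp'_eq.symm
  · have hu_conj := star_left_conjugate_eq_star_mul_self_of_mul_star_le ha.2 hc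
      (hu.trans (le_add_of_nonneg_right (mul_star_self_nonneg v)))
    have hv_conj := star_left_conjugate_eq_star_mul_self_of_mul_star_le hb.2 hc
      (le_add_of_nonneg_left hq.nonneg)
    rw [hvw, hp'_eq, mul_add, add_mul]
    refine subset_closure (add_mem (Submodule.subset_span ⟨star (u * w), u * w, ?_⟩)
      (Submodule.subset_span ⟨star (v * w), v * w, ?_⟩))
    · rw [star_mul, ← hu_conj]; noncomm_ring
    · rw [star_mul, ← hv_conj]; noncomm_ring

/-- Let `A` be a unital C*-algebra whose projection monoid has the Riesz decomposition
property, and let `q, p'` be projections with `p' ≲ 1`.  If `p' ∼ a ⊕ b` with `a ≲ q` and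
`b ≲ 1 − q`, then there is a partial isometry `v` with `v*v ≤ p'`, `vv* ≤ 1 − q`, and `p'`
in the closed two-sided ideal generated by `q + vv*`. -/
theorem riesz_step_full_projection
    (hRiesz : ∀ p q₁ q₂ : A, IsProjection p → IsProjection q₁ → IsProjection q₂ →
      q₁ * q₂ = 0 → MvNLE p (q₁ + q₂) →
      ∃ p₁ p₂ : A, IsProjection p₁ ∧ IsProjection p₂ ∧ p₁ * p₂ = 0 ∧
        (∃ w : A, star w * w = p ∧ w * star w = p₁ + p₂) ∧ MvNLE p₁ q₁ ∧ MvNLE p₂ q₂)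
    (q p' : A) (hq : IsProjection q) (hp' : IsProjection p')
    (hp'1 : MvNLE p' 1)
    (hdec : ∃ a b : A, IsProjection a ∧ IsProjection b ∧ a * b = 0 ∧
      (∃ w : A, star w * w = p' ∧ w * star w = a + b) ∧ MvNLE a q ∧ MvNLE b (1 - q)) :
    ∃ v : A, star v * v ≤ p' ∧ v * star v ≤ 1 - q ∧
      p' ∈ clspan {z : A | ∃ x y : A, z = x * (q + v * star v) * y} :=
  riesz_step_full_projection_general q p' hq hp' hdec
end
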